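/- Let N₂₁ = [[−A₀, −A₁, …, −A_{k−3}],[B₀, B₁, …, B_{k−3}]] be a 2n × (k−2)n quaternionic block matrix. Then ‖N₂₁‖₂² ≤ (1/2)[ Σ_{i=0}^{k−3}(‖Aᵢ‖₂² + ‖Bᵢ‖₂²) + √((Σ_{i=0}^{k−3}(‖Aᵢ‖₂² − ‖Bᵢ‖₂²))² + 4‖Σ_{i=0}^{k−3} AᵢBᵢᴴ‖₂²) ]. -/

import Mathlib

/-
For `N = N₂₁`, `‖N‖ = ‖Nᴴ‖`, and for `y = (y₁, y₂)` one has `Nᴴ y = (Bᵢᴴ y₂ - Aᵢᴴ y₁)ᵢ`.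
Expanding the square, `‖Nᴴ y‖² ≤ α ‖y₁‖² + β ‖y₂‖² + 2 t ‖y₁‖ ‖y₂‖` with `α = ∑ ‖Aᵢ‖²`,
`β = ∑ ‖Bᵢ‖²` and `t = ‖∑ Aᵢ Bᵢᴴ‖`, because the cross terms sum to `⟪y₁, (∑ Aᵢ Bᵢᴴ) y₂⟫`.
The right side is the quadratic form of `!![α, t; t, β]` at `(‖y₁‖, ‖y₂‖)`, hence at most its
largest eigenvalue times `‖y‖²`. Quaternionic vectors are treated as a real inner product space,
`⟪u, v⟫ = Re ∑ uᵢ v̄ᵢ`, in which `Aᴴ` is the adjoint of `A`.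
-/

open scoped Matrix Quaternion BigOperators

noncomputable section

/-- Euclidean norm of a vector with entries in a normed ring (e.g. the quaternions). -/
def qVecNorm {R : Type*} [NormedRing R] {n : Type*} [Fintype n] (x : n → R) : ℝ :=
  Real.sqrt (∑ i, ‖x i‖ ^ 2)

/-- Operator 2-norm (spectral norm) of a matrix over a normed ring. -/
def qSpecNorm {R : Type*} [NormedRing R] {m n : Type*} [Fintype m] [Fintype n]
    (A : Matrix m n R) : ℝ :=
  sSup {c : ℝ | ∃ x : n → R, x ≠ 0 ∧ c = qVecNorm (A.mulVec x) / qVecNorm x}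

/-- `μ` is a right eigenvalue of the quaternionic matrix `A`. -/
def RightEig {n : Type*} [Fintype n] (A : Matrix n n ℍ[ℝ]) (μ : ℍ[ℝ]) : Prop :=
  ∃ x : n → ℍ[ℝ], x ≠ 0 ∧ A.mulVec x = fun i => x i * μ

/-- Right spectral radius of a quaternionic matrix. -/
def rSpecRad {n : Type*} [Fintype n] (A : Matrix n n ℍ[ℝ]) : ℝ :=
  sSup {r : ℝ | ∃ μ : ℍ[ℝ], RightEig A μ ∧ r = ‖μ‖}

/-- Spectral radius of a real 2×2 matrix. -/
def realSpecRad (B : Matrix (Fin 2) (Fin 2) ℝ) : ℝ :=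
  sSup {r : ℝ | ∃ μ ∈ spectrum ℝ B, r = |μ|}

open Matrix Finset
open scoped RealInnerProductSpace

theorem qVecNorm_eq_norm_toLp {R : Type*} [NormedRing R] {n : Type*} [Fintype n] (x : n → R) :
    qVecNorm x = ‖WithLp.toLp 2 x‖ := by
  rw [qVecNorm, PiLp.norm_eq_of_L2]

theorem qVecNorm_sq {R : Type*} [NormedRing R] {n : Type*} [Fintype n] (x : n → R) :
    qVecNorm x ^ 2 = ∑ i, ‖x i‖ ^ 2 :=
  Real.sq_sqrt (by positivity)

theorem qVecNorm_nonneg {R : Type*} [NormedRing R] {n : Type*} [Fintype n] (x : n → R) :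
    0 ≤ qVecNorm x :=
  Real.sqrt_nonneg _

theorem qVecNorm_pos {R : Type*} [NormedRing R] {n : Type*} [Fintype n] {x : n → R}
    (hx : x ≠ 0) : 0 < qVecNorm x := by
  rw [qVecNorm_eq_norm_toLp]; simpa using hx

theorem Quaternion.re_mul_comm (a b : ℍ[ℝ]) : (a * b).re = (b * a).re := by
  simp only [Quaternion.re_mul]; ring

theorem Quaternion.inner_star_mul_left (a u w : ℍ[ℝ]) : ⟪star a * u, w⟫ = ⟪u, a * w⟫ := by
  rw [Quaternion.inner_def, Quaternion.inner_def, star_mul, mul_assoc, Quaternion.re_mul_comm,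
    mul_assoc]

section

variable {m n : Type*} [Fintype m] [Fintype n]

theorem exists_qVecNorm_mulVec_le (A : Matrix m n ℍ[ℝ]) :
    ∃ C, ∀ x, qVecNorm (A *ᵥ x) ≤ C * qVecNorm x := by
  let f : PiLp 2 (fun _ : n => ℍ[ℝ]) →ₗ[ℝ] PiLp 2 (fun _ : m => ℍ[ℝ]) :=
    { toFun x := WithLp.toLp 2 (A *ᵥ WithLp.ofLp x)
      map_add' x y := by simp [mulVec_add]
      map_smul' r x := by simp [mulVec_smul] }
  refine ⟨‖LinearMap.toContinuousLinearMap f‖, fun x => ?_⟩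
  simp only [qVecNorm_eq_norm_toLp]
  exact (LinearMap.toContinuousLinearMap f).le_opNorm (WithLp.toLp 2 x)

theorem qVecNorm_mulVec_le (A : Matrix m n ℍ[ℝ]) (x : n → ℍ[ℝ]) :
    qVecNorm (A *ᵥ x) ≤ qSpecNorm A * qVecNorm x := by
  rcases eq_or_ne x 0 with rfl | hx
  · simp [qVecNorm]
  obtain ⟨C, hC⟩ := exists_qVecNorm_mulVec_le A
  have hbdd : BddAbove {c : ℝ | ∃ x : n → ℍ[ℝ], x ≠ 0 ∧ c = qVecNorm (A *ᵥ x) / qVecNorm x} := by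
    refine ⟨C, ?_⟩
    rintro c ⟨y, hy, rfl⟩
    rw [div_le_iff₀ (qVecNorm_pos hy)]
    exact hC y
  rw [← div_le_iff₀ (qVecNorm_pos hx)]
  exact le_csSup hbdd ⟨x, hx, rfl⟩

theorem qSpecNorm_nonneg (A : Matrix m n ℍ[ℝ]) : 0 ≤ qSpecNorm A :=
  Real.sSup_nonneg fun _ ⟨_, _, hc⟩ => hc ▸ div_nonneg (qVecNorm_nonneg _) (qVecNorm_nonneg _)

theorem qSpecNorm_le_of_forall {A : Matrix m n ℍ[ℝ]} {C : ℝ} (hC : 0 ≤ C)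
    (h : ∀ x, qVecNorm (A *ᵥ x) ≤ C * qVecNorm x) : qSpecNorm A ≤ C := by
  refine Real.sSup_le ?_ hC
  rintro c ⟨x, hx, rfl⟩
  rw [div_le_iff₀ (qVecNorm_pos hx)]
  exact h x

theorem inner_conjTranspose_mulVec (A : Matrix m n ℍ[ℝ]) (u : m → ℍ[ℝ]) (w : n → ℍ[ℝ]) :
    ⟪WithLp.toLp 2 (Aᴴ *ᵥ u), WithLp.toLp 2 w⟫ = ⟪WithLp.toLp 2 u, WithLp.toLp 2 (A *ᵥ w)⟫ := by
  simp only [PiLp.inner_apply, mulVec, dotProduct, conjTranspose_apply, sum_inner, inner_sum,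
    Quaternion.inner_star_mul_left]
  exact Finset.sum_comm

theorem qSpecNorm_conjTranspose_le (A : Matrix m n ℍ[ℝ]) : qSpecNorm Aᴴ ≤ qSpecNorm A := by
  refine qSpecNorm_le_of_forall (qSpecNorm_nonneg A) fun y => ?_
  set z := Aᴴ *ᵥ y
  have hz : qVecNorm z ^ 2 ≤ qVecNorm z * (qSpecNorm A * qVecNorm y) := calc
    qVecNorm z ^ 2 = ⟪WithLp.toLp 2 y, WithLp.toLp 2 (A *ᵥ z)⟫ := by
      rw [← inner_conjTranspose_mulVec, real_inner_self_eq_norm_sq, qVecNorm_eq_norm_toLp]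
    _ ≤ qVecNorm y * qVecNorm (A *ᵥ z) := by
      simpa only [qVecNorm_eq_norm_toLp] using real_inner_le_norm _ _
    _ ≤ qVecNorm y * (qSpecNorm A * qVecNorm z) :=
      mul_le_mul_of_nonneg_left (qVecNorm_mulVec_le A z) (qVecNorm_nonneg y)
    _ = qVecNorm z * (qSpecNorm A * qVecNorm y) := by ring
  nlinarith [mul_nonneg (qSpecNorm_nonneg A) (qVecNorm_nonneg y), qVecNorm_nonneg z]

theorem qSpecNorm_conjTranspose (A : Matrix m n ℍ[ℝ]) : qSpecNorm Aᴴ = qSpecNorm A :=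
  (qSpecNorm_conjTranspose_le A).antisymm (by
    simpa only [conjTranspose_conjTranspose] using qSpecNorm_conjTranspose_le Aᴴ)

theorem qSpecNorm_sq_le_of_forall {A : Matrix m n ℍ[ℝ]} {c : ℝ} (hc : 0 ≤ c)
    (h : ∀ x, qVecNorm (A *ᵥ x) ^ 2 ≤ c * qVecNorm x ^ 2) : qSpecNorm A ^ 2 ≤ c := by
  refine (sq_le_sq₀ (qSpecNorm_nonneg A) (Real.sqrt_nonneg c)).mpr
    (qSpecNorm_le_of_forall (Real.sqrt_nonneg c) fun x => ?_) |>.trans_eq (Real.sq_sqrt hc)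
  rw [← sq_le_sq₀ (qVecNorm_nonneg _) (mul_nonneg (Real.sqrt_nonneg c) (qVecNorm_nonneg x)),
    mul_pow, Real.sq_sqrt hc]
  exact h x

theorem qVecNorm_conjTranspose_mulVec_sq_le (A : Matrix m n ℍ[ℝ]) (x : m → ℍ[ℝ]) :
    qVecNorm (Aᴴ *ᵥ x) ^ 2 ≤ qSpecNorm A ^ 2 * qVecNorm x ^ 2 := by
  rw [← mul_pow, ← qSpecNorm_conjTranspose A]
  exact pow_le_pow_left₀ (qVecNorm_nonneg _) (qVecNorm_mulVec_le _ _) 2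

end

def twoBlockRow {ι n k R : Type*} [Neg R] (A B : ι → Matrix n k R) :
    Matrix (Fin 2 × n) (ι × k) R :=
  fun p q => if p.1 = 0 then -A q.1 p.2 q.2 else B q.1 p.2 q.2

theorem conjTranspose_twoBlockRow_mulVec {ι n k R : Type*} [Fintype n] [Ring R] [StarRing R]
    (A B : ι → Matrix n k R) (y : Fin 2 × n → R) :
    (twoBlockRow A B)ᴴ *ᵥ y =
      fun q => ((B q.1)ᴴ *ᵥ fun j => y (1, j)) q.2 - ((A q.1)ᴴ *ᵥ fun j => y (0, j)) q.2 := by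
  ext q
  simp only [twoBlockRow, mulVec, dotProduct, conjTranspose_apply, Fintype.sum_prod_type,
    Fin.sum_univ_two, Fin.isValue, ↓reduceIte, one_ne_zero, star_neg, neg_mul, sum_neg_distrib]
  abel

theorem qVecNorm_conjTranspose_twoBlockRow_mulVec_sq_le {ι n k : Type*} [Fintype ι] [Fintype n]
    [Fintype k] (A B : ι → Matrix n k ℍ[ℝ]) (y : Fin 2 × n → ℍ[ℝ]) :
    qVecNorm ((twoBlockRow A B)ᴴ *ᵥ y) ^ 2 ≤
      (∑ i, qSpecNorm (A i) ^ 2) * qVecNorm (fun j => y (0, j)) ^ 2 +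
      (∑ i, qSpecNorm (B i) ^ 2) * qVecNorm (fun j => y (1, j)) ^ 2 +
      2 * qSpecNorm (∑ i, A i * (B i)ᴴ) * qVecNorm (fun j => y (0, j)) *
        qVecNorm (fun j => y (1, j)) := by
  set y₁ : n → ℍ[ℝ] := fun j => y (0, j)
  set y₂ : n → ℍ[ℝ] := fun j => y (1, j)
  set C := ∑ i, A i * (B i)ᴴ
  have hsplit : qVecNorm ((twoBlockRow A B)ᴴ *ᵥ y) ^ 2 =
      ∑ i, qVecNorm ((B i)ᴴ *ᵥ y₂ - (A i)ᴴ *ᵥ y₁) ^ 2 := by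
    simp only [conjTranspose_twoBlockRow_mulVec, qVecNorm_sq, Fintype.sum_prod_type]
    rfl
  have hexpand : ∀ i, qVecNorm ((B i)ᴴ *ᵥ y₂ - (A i)ᴴ *ᵥ y₁) ^ 2 =
      qVecNorm ((B i)ᴴ *ᵥ y₂) ^ 2 + qVecNorm ((A i)ᴴ *ᵥ y₁) ^ 2 -
        2 * ⟪WithLp.toLp 2 ((A i)ᴴ *ᵥ y₁), WithLp.toLp 2 ((B i)ᴴ *ᵥ y₂)⟫ := fun i => by
    simp only [qVecNorm_eq_norm_toLp, WithLp.toLp_sub, norm_sub_sq_real, real_inner_comm]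
    ring
  have hcross : ∑ i, ⟪WithLp.toLp 2 ((A i)ᴴ *ᵥ y₁), WithLp.toLp 2 ((B i)ᴴ *ᵥ y₂)⟫ =
      ⟪WithLp.toLp 2 y₁, WithLp.toLp 2 (C *ᵥ y₂)⟫ := by
    simp only [inner_conjTranspose_mulVec, mulVec_mulVec, C, sum_mulVec, WithLp.toLp_sum,
      inner_sum]
  have hcross_le : -⟪WithLp.toLp 2 y₁, WithLp.toLp 2 (C *ᵥ y₂)⟫ ≤
      qSpecNorm C * qVecNorm y₁ * qVecNorm y₂ := calc
    _ ≤ qVecNorm y₁ * qVecNorm (C *ᵥ y₂) := by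
      simpa only [qVecNorm_eq_norm_toLp] using (neg_le_abs _).trans (abs_real_inner_le_norm _ _)
    _ ≤ qVecNorm y₁ * (qSpecNorm C * qVecNorm y₂) :=
      mul_le_mul_of_nonneg_left (qVecNorm_mulVec_le C y₂) (qVecNorm_nonneg y₁)
    _ = qSpecNorm C * qVecNorm y₁ * qVecNorm y₂ := by ring
  have hA : ∑ i, qVecNorm ((A i)ᴴ *ᵥ y₁) ^ 2 ≤ ∑ i, qSpecNorm (A i) ^ 2 * qVecNorm y₁ ^ 2 :=
    sum_le_sum fun i _ => qVecNorm_conjTranspose_mulVec_sq_le (A i) y₁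
  have hB : ∑ i, qVecNorm ((B i)ᴴ *ᵥ y₂) ^ 2 ≤ ∑ i, qSpecNorm (B i) ^ 2 * qVecNorm y₂ ^ 2 :=
    sum_le_sum fun i _ => qVecNorm_conjTranspose_mulVec_sq_le (B i) y₂
  rw [hsplit, sum_congr rfl fun i _ => hexpand i, sum_sub_distrib, sum_add_distrib, ← mul_sum,
    hcross, sum_mul, sum_mul]
  linarith

/-- The right-hand side is the largest eigenvalue of `!![a, t; t, b]` times `x ^ 2 + y ^ 2`. -/
theorem quadForm_two_le_maxEigenvalue_mul (a b t x y : ℝ) :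
    a * x ^ 2 + b * y ^ 2 + 2 * t * x * y ≤
      1 / 2 * (a + b + √((a - b) ^ 2 + 4 * t ^ 2)) * (x ^ 2 + y ^ 2) := by
  set d := √((a - b) ^ 2 + 4 * t ^ 2)
  have hd : d ^ 2 = (a - b) ^ 2 + 4 * t ^ 2 := Real.sq_sqrt (by positivity)
  have hab : |a - b| ≤ d := Real.abs_le_sqrt (le_add_of_nonneg_right (by positivity))
  have hp : 0 ≤ d - (a - b) := by linarith [le_abs_self (a - b)]
  have hq : 0 ≤ d + (a - b) := by linarith [neg_abs_le (a - b)]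
  -- As `(d - (a - b)) (d + (a - b)) = 4 t²`, multiplying the gap by `d - (a - b)` gives a square.
  have hE : 0 ≤ (d - (a - b)) * x ^ 2 + (d + (a - b)) * y ^ 2 - 4 * t * x * y := by
    rcases hp.eq_or_lt with hp0 | hp0
    · have ht : t = 0 := by nlinarith
      subst ht; nlinarith
    · refine nonneg_of_mul_nonneg_right ?_ hp0
      have : 0 ≤ ((d - (a - b)) * x - 2 * t * y) ^ 2 := sq_nonneg _
      linear_combination this - y ^ 2 * hd
  linarith

theorem qSpecNorm_twoBlockRow_sq_le {ι n k : Type*} [Fintype ι] [Fintype n] [Fintype k]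
    (A B : ι → Matrix n k ℍ[ℝ]) :
    qSpecNorm (twoBlockRow A B) ^ 2 ≤
      1 / 2 * ((∑ i, (qSpecNorm (A i) ^ 2 + qSpecNorm (B i) ^ 2)) +
        √((∑ i, (qSpecNorm (A i) ^ 2 - qSpecNorm (B i) ^ 2)) ^ 2 +
          4 * qSpecNorm (∑ i, A i * (B i)ᴴ) ^ 2)) := by
  rw [← qSpecNorm_conjTranspose, sum_add_distrib, sum_sub_distrib]
  refine qSpecNorm_sq_le_of_forall (by positivity) fun y => ?_
  have hy : qVecNorm y ^ 2 =
      qVecNorm (fun j => y (0, j)) ^ 2 + qVecNorm (fun j => y (1, j)) ^ 2 := by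
    simp only [qVecNorm_sq, Fintype.sum_prod_type, Fin.sum_univ_two]
  rw [hy]
  exact (qVecNorm_conjTranspose_twoBlockRow_mulVec_sq_le A B y).trans
    (quadForm_two_le_maxEigenvalue_mul _ _ _ _ _)

theorem specNorm_twoBlockRow_le (m n : ℕ)
    (A B : ℕ → Matrix (Fin n) (Fin n) ℍ[ℝ]) :
    qSpecNorm (fun (p : Fin 2 × Fin n) (q : Fin m × Fin n) =>
        if p.1 = 0 then -(A (q.1 : ℕ)) p.2 q.2 else (B (q.1 : ℕ)) p.2 q.2) ^ 2 ≤
      (1 / 2) * ((∑ i ∈ Finset.range m, (qSpecNorm (A i) ^ 2 + qSpecNorm (B i) ^ 2)) +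
        Real.sqrt ((∑ i ∈ Finset.range m, (qSpecNorm (A i) ^ 2 - qSpecNorm (B i) ^ 2)) ^ 2 +
          4 * qSpecNorm (∑ i ∈ Finset.range m, A i * (B i)ᴴ) ^ 2)) := by
  simp only [Finset.sum_range]
  exact qSpecNorm_twoBlockRow_sq_le (fun i : Fin m => A i) (fun i : Fin m => B i)
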